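/- arXiv:1904.02053 — 2 statements merged into one kernel-verified Lean document; each statement's English description precedes it below -/
import Mathlib

section
/- Let X be a smooth projective variety over ℂ and L ≅ L₁ ⊗ L₂ line bundles on X. Suppose there exist subspaces W₁ ⊆ H⁰(X, L₁) and W₂ ⊆ H⁰(X, L₂) such that the multiplication map W₁ ⊗ W₂ → H⁰(X, L) is an isomorphism and dim W₁ = 1. Then W₂ = H⁰(X, L₂), h⁰(X, L₁) = 1, and every divisor in the linear system |L| contains the unique effective divisor D₁ of |L₁| as a fixed part, i.e. |L| = |L₂| + D₁. -/
/- STATEMENT 1.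
X a smooth projective variety over ℂ with function field `F`; sections of the
line bundles L, L₁, L₂ (with L ≅ L₁ ⊗ L₂) are modeled, after a choice of
rational trivializations, as finite-dimensional ℂ-subspaces `H0, H1, H2` of `F`,
the multiplication of sections being the field multiplication
(`hmul : H1 · H2 ⊆ H0`).  `W1 ⊆ H1`, `W2 ⊆ H2` are subspaces such that the
multiplication map W₁ ⊗ W₂ → H⁰(X, L) is an isomorphism (`hinj`, `hrange`),
`dim W₁ = 1`, and |L| is nonempty.  Conclusion: W₂ = H⁰(X, L₂),
h⁰(X, L₁) = 1, and every divisor of |L| contains the unique effective divisor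
D₁ = div(s) of |L₁| as a fixed part, i.e. every section of L is s·t with
t ∈ H⁰(X, L₂) (that is, |L| = |L₂| + D₁). -/
theorem stmt1 {F : Type*} [Field F] [Algebra ℂ F]
    (H0 H1 H2 : Submodule ℂ F)
    [FiniteDimensional ℂ H1] [FiniteDimensional ℂ H2]
    (hmul : ∀ a ∈ H1, ∀ b ∈ H2, a * b ∈ H0)
    (W1 W2 : Submodule ℂ F) (hW1 : W1 ≤ H1) (hW2 : W2 ≤ H2)
    (hinj : Function.Injective
      (TensorProduct.lift (((LinearMap.mul ℂ F).domRestrict W1).compl₂ W2.subtype)))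
    (hrange : LinearMap.range
      (TensorProduct.lift (((LinearMap.mul ℂ F).domRestrict W1).compl₂ W2.subtype)) = H0)
    (hdimW1 : Module.finrank ℂ W1 = 1)
    (hne : H0 ≠ ⊥) :
    W2 = H2 ∧ Module.finrank ℂ H1 = 1 ∧
      ∃ s ∈ W1, s ≠ 0 ∧ ∀ u ∈ H0, ∃ t ∈ H2, u = s * t := by
  classical
  set f := TensorProduct.lift (((LinearMap.mul ℂ F).domRestrict W1).compl₂ W2.subtype) with hf
  obtain ⟨v, hv0, hspan⟩ := (finrank_eq_one_iff' (K := ℂ) (V := W1)).mp hdimW1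
  set s : F := (v : F) with hs
  have hsW1 : s ∈ W1 := v.2
  have hs0 : s ≠ 0 := fun h => hv0 (Subtype.ext h)
  -- every element of H0 is s * t with t ∈ W2
  have key : ∀ u ∈ H0, ∃ t ∈ W2, u = s * t := by
    intro u hu
    rw [← hrange] at hu
    obtain ⟨z, hz⟩ := hu
    rw [← hz]
    clear hz
    induction z using TensorProduct.induction_on with
    | zero => exact ⟨0, W2.zero_mem, by simp⟩
    | tmul w1 w2 =>
        obtain ⟨c, hc⟩ := hspan w1
        refine ⟨c • (w2 : F), W2.smul_mem c w2.2, ?_⟩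
        have h1 : (w1 : F) = c • s := by rw [← hc]; rfl
        simp only [hf, TensorProduct.lift.tmul, LinearMap.compl₂_apply,
          LinearMap.domRestrict_apply, LinearMap.mul_apply', Submodule.subtype_apply]
        rw [h1, smul_mul_assoc, mul_smul_comm]
    | add x y hx hy =>
        obtain ⟨t1, ht1, e1⟩ := hx
        obtain ⟨t2, ht2, e2⟩ := hy
        exact ⟨t1 + t2, W2.add_mem ht1 ht2, by rw [map_add, e1, e2, mul_add]⟩
  -- conversely s * t ∈ H0 for t ∈ W2
  have key' : ∀ t ∈ W2, s * t ∈ H0 := by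
    intro t ht
    rw [← hrange]
    exact ⟨(⟨s, hsW1⟩ : W1) ⊗ₜ (⟨t, ht⟩ : W2), by
      simp [hf, TensorProduct.lift.tmul]⟩
  -- W2 = H2
  have hW2eq : W2 = H2 := by
    refine le_antisymm hW2 ?_
    intro t ht
    have h0 : s * t ∈ H0 := hmul s (hW1 hsW1) t ht
    obtain ⟨t', ht', he⟩ := key _ h0
    have : t = t' := mul_left_cancel₀ hs0 he
    rwa [this]
  -- a nonzero element of H2
  obtain ⟨u, hu, hu0⟩ := Submodule.exists_mem_ne_zero_of_ne_bot hne
  obtain ⟨t0, ht0, he0⟩ := key u hu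
  have ht00 : t0 ≠ 0 := by rintro rfl; simp [he0] at hu0
  have ht0H2 : t0 ∈ H2 := hW2 ht0
  -- every a ∈ H1 is a ℂ-multiple of s
  have hmult : ∀ a ∈ H1, ∃ c : ℂ, a = c • s := by
    intro a ha
    set x : F := a * s⁻¹ with hx
    have hxsmul : ∀ n ∈ H2, x • n ∈ H2 := by
      intro n hn
      have h0 : a * n ∈ H0 := hmul a ha n hn
      obtain ⟨t', ht', he⟩ := key _ h0
      have : x • n = t' := by
        rw [smul_eq_mul, hx, mul_assoc, mul_comm s⁻¹ n, ← mul_assoc, he,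
          mul_assoc, mul_comm t' s⁻¹, ← mul_assoc, mul_inv_cancel₀ hs0, one_mul]
      rw [this]
      exact hW2 ht'
    have hint : IsIntegral ℂ x :=
      isIntegral_of_smul_mem_submodule H2 (fun hb => ht00 (by
        rw [hb] at ht0H2; simpa using ht0H2))
        ((Submodule.fg_iff_finiteDimensional H2).mpr inferInstance) x hxsmul
    have hdeg : (minpoly ℂ x).degree = 1 :=
      IsAlgClosed.degree_eq_one_of_irreducible ℂ (minpoly.irreducible hint)
    obtain ⟨c, hc⟩ := minpoly.mem_range_of_degree_eq_one ℂ x hdeg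
    refine ⟨c, ?_⟩
    have : a = x * s := by rw [hx, mul_assoc, inv_mul_cancel₀ hs0, mul_one]
    rw [this, ← hc, Algebra.smul_def]
  -- H1 = span of s
  have hH1 : H1 = Submodule.span ℂ {s} := by
    apply le_antisymm
    · intro a ha
      obtain ⟨c, hc⟩ := hmult a ha
      rw [hc]
      exact Submodule.smul_mem _ c (Submodule.mem_span_singleton_self s)
    · rw [Submodule.span_singleton_le_iff_mem]
      exact hW1 hsW1
  refine ⟨hW2eq, ?_, s, hsW1, hs0, ?_⟩
  · rw [hH1]
    exact finrank_span_singleton hs0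
  · intro u hu
    obtain ⟨t, ht, he⟩ := key u hu
    exact ⟨t, hW2 ht, he⟩
end

section
/- Let K, Λ, Δ be divisor classes on a smooth projective surface with K nef and big, Λ and Δ nef, K² = 5, 3K ≡ Λ + Δ (so K·Λ + K·Δ = 15), and Λ² ≥ 4. Then K·Λ ≥ 5, K·Δ ≤ 10, Δ² ≤ 20, and hence K·Δ + Δ² ≤ 30; in particular, if C is a smooth curve with 2g(C) − 2 = K·Δ + Δ², then g(C) ≤ 16. -/
/- STATEMENT 10.
Divisor classes K, Λ, Δ on a smooth projective surface with intersection form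
`B` (values in ℤ): K nef and big, Λ, Δ nef, K² = 5, Λ + Δ = 3K (numerically),
Λ² ≥ 4.  Nefness gives K·Λ ≥ 0, K·Δ ≥ 0 and the Hodge index theorem gives
(K·Λ)² ≥ K²·Λ² and (K·Δ)² ≥ K²·Δ².  Then K·Λ ≥ 5, K·Δ ≤ 10, Δ² ≤ 20,
K·Δ + Δ² ≤ 30, and any smooth curve C with 2g(C) − 2 = K·Δ + Δ² has g ≤ 16. -/
theorem stmt10 {M : Type*} [AddCommGroup M] [Module ℤ M]
    (B : M →ₗ[ℤ] M →ₗ[ℤ] ℤ) (hsymm : ∀ x y : M, B x y = B y x)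
    (K Λ Δ : M)
    (hK2 : B K K = 5)
    (hsum : Λ + Δ = (3 : ℤ) • K)
    (hΛ2 : 4 ≤ B Λ Λ)
    (hnefΛ : 0 ≤ B K Λ) (hnefΔ : 0 ≤ B K Δ)
    (hHodgeΛ : B K K * B Λ Λ ≤ (B K Λ) ^ 2)
    (hHodgeΔ : B K K * B Δ Δ ≤ (B K Δ) ^ 2) :
    5 ≤ B K Λ ∧ B K Δ ≤ 10 ∧ B Δ Δ ≤ 20 ∧ B K Δ + B Δ Δ ≤ 30 ∧
      ∀ g : ℤ, 2 * g - 2 = B K Δ + B Δ Δ → g ≤ 16 := by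
  have hsum' : B K Λ + B K Δ = 15 := by
    have : B K (Λ + Δ) = B K ((3 : ℤ) • K) := by rw [hsum]
    simpa [map_add, map_smul, hK2] using this
  have h1 : 5 ≤ B K Λ := by nlinarith [hHodgeΛ, hΛ2, hnefΛ, hK2]
  have h2 : B K Δ ≤ 10 := by omega
  have h3 : B Δ Δ ≤ 20 := by nlinarith [hHodgeΔ, hnefΔ]
  refine ⟨h1, h2, h3, by omega, fun g hg => by omega⟩
end
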